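/- arXiv:1612.02412 — 2 statements merged into one kernel-verified Lean document; each statement's English description precedes it below -/
import Mathlib

section
/- The set S consisting of the six diameters of C whose twelve endpoints are the points with polar angles jπ/6 for j = 0,1,…,11 satisfies diam(S) = π − δ(2) = π/2 + 1. In particular diam(6) ≤ π/2 + 1. -/
open Real MeasureTheory

/-- Arc distance between points on the unit circle, given by their polar angles:
the length of the shorter arc between them. -/
noncomputable def arcDist (p q : ℝ) : ℝ := ⨅ n : ℤ, |p - q + 2 * π * n|

/-- Euclidean length of the chord between the circle points with angles `u` and `v`. -/
noncomputable def chordLen (u v : ℝ) : ℝ := 2 * Real.sin (arcDist u v / 2)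

/-- A pair of angles is a genuine shortcut (chord) if its endpoints are distinct points. -/
def IsShortcut (s : ℝ × ℝ) : Prop := arcDist s.1 s.2 ≠ 0

/-- δ(a) = arcsin(a/2) - a/2. -/
noncomputable def sdelta (a : ℝ) : ℝ := Real.arcsin (a / 2) - a / 2

/-- Cost of a path that starts at `p`, fully traverses the listed chords in order
(travelling along the circle in between), and ends at `q`. -/
noncomputable def walkCost (q : ℝ) : ℝ → List (ℝ × ℝ) → ℝ
  | p, [] => arcDist p q
  | p, e :: L => arcDist p e.1 + chordLen e.1 e.2 + walkCost q e.2 L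

/-- Shortest-path distance from `p` to `q` using the shortcuts of `S`
(each usable in either orientation, and always traversed completely). -/
noncomputable def dS (S : Finset (ℝ × ℝ)) (p q : ℝ) : ℝ :=
  sInf {c | ∃ L : List (ℝ × ℝ), (∀ e ∈ L, e ∈ S ∨ (e.2, e.1) ∈ S) ∧ c = walkCost q p L}

/-- Diameter of the circle augmented with the shortcuts of `S`. -/
noncomputable def diamS (S : Finset (ℝ × ℝ)) : ℝ :=
  sSup {d | ∃ p q : ℝ, d = dS S p q}

/-- diam(k): the optimal diameter achievable with `k` shortcuts. -/
noncomputable def diamK (k : ℕ) : ℝ :=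
  sInf {d | ∃ S : Finset (ℝ × ℝ), S.card = k ∧ (∀ s ∈ S, IsShortcut s) ∧ d = diamS S}

/-- Distance from `p` to `q` when a single shortcut with endpoints `u`, `v` is available. -/
noncomputable def dOne (u v p q : ℝ) : ℝ :=
  min (arcDist p q)
    (min (arcDist p u + chordLen u v + arcDist v q)
      (arcDist p v + chordLen u v + arcDist u q))

/-- Two angles represent the same point of the circle. -/
def SamePoint (p q : ℝ) : Prop := arcDist p q = 0

/-- Two pairs of angles represent the same chord of the circle. -/
def SameChord (s t : ℝ × ℝ) : Prop :=
  (SamePoint s.1 t.1 ∧ SamePoint s.2 t.2) ∨ (SamePoint s.1 t.2 ∧ SamePoint s.2 t.1)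

/-- `p` lies in the deep umbra of the shortcut from `u` to `u + β`
(where `0 < β ≤ π` is the counterclockwise arc spanned by the shortcut):
`p` lies in the inner umbra, and `|p u'| + |s| ≥ d(p, v')` where `u'` is the
endpoint closer to `p` and `v'` the other one. -/
def InDeepUmbra (u β p : ℝ) : Prop :=
  (∃ t : ℝ, sdelta (chordLen u (u + β)) ≤ t ∧ t ≤ β - sdelta (chordLen u (u + β)) ∧
    arcDist p (u + t) = 0) ∧
  (arcDist p u ≤ arcDist p (u + β) →
    arcDist p (u + β) ≤ chordLen p u + chordLen u (u + β)) ∧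
  (arcDist p (u + β) ≤ arcDist p u →
    arcDist p u ≤ chordLen p (u + β) + chordLen u (u + β))

/-- `d` equals δ*_k : for `k ∈ {3,4,5}` this is `δ(a*_k)` where `a*_k + δ(a*_k) = (k-1)π/k`,
and for `k = 6` it is `δ(2) = π/2 - 1`. -/
def dstarSpec (k : ℕ) (d : ℝ) : Prop :=
  (k = 6 ∧ d = sdelta 2) ∨
    (∃ a, a ∈ Set.Icc (0 : ℝ) 2 ∧ a + sdelta a = ((k : ℝ) - 1) * π / k ∧ d = sdelta a)

/-!
Identify angles with points of `AddCircle (2π)`, so that `arcDist` is the quotient distance.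
Every shortcut of the configuration is a diameter of length `2`.

Upper bound: if `d(p, q) > π/2 + 1`, the antipode `q'` of `q` is within `π/2 - 1` of `p`.
Walking from `p` to an endpoint `u` of a diameter, crossing it and walking from `u + π` to `q`
costs `d(p, u) + 2 + d(u, q')`. Since endpoints are spaced `π/6` apart, some `u` makes
`d(p, u) + d(u, q') ≤ max (π/6) d(p, q') ≤ π/2 - 1`.

Lower bound: between `0` and `π/2 + 1` the arc costs `π/2 + 1`, a path through one diameter costs
at least `2 + π - (π/2 + 1)` by the triangle inequality, and one through two diameters at least `4`.
-/

local notation "𝕋" => AddCircle (2 * π)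

section ArcDist

lemma coe_add_two_pi_mul_intCast (x : ℝ) (n : ℤ) : ((x + 2 * π * n : ℝ) : 𝕋) = x := by
  rw [AddCircle.coe_add, show 2 * π * n = n • (2 * π) by rw [zsmul_eq_mul]; ring,
    AddCircle.coe_zsmul, AddCircle.coe_period, smul_zero, add_zero]

lemma exists_abs_add_two_pi_mul_le_pi (x : ℝ) : ∃ n : ℤ, |x + 2 * π * n| ≤ π := by
  refine ⟨-round ((2 * π)⁻¹ * x), ?_⟩
  have h := AddCircle.norm_le_half_period (2 * π) (x := (x : 𝕋)) (by positivity)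
  rw [AddCircle.norm_eq, abs_of_pos (by positivity : 0 < 2 * π)] at h
  convert h using 2
  · push_cast; ring
  · ring

lemma dist_coe_le_abs (p q : ℝ) (n : ℤ) : dist (p : 𝕋) q ≤ |p - q + 2 * π * n| := by
  rw [dist_eq_norm, ← AddCircle.coe_sub, ← coe_add_two_pi_mul_intCast (p - q) n]
  exact QuotientAddGroup.norm_mk_le_norm

lemma arcDist_eq_dist (p q : ℝ) : arcDist p q = dist (p : 𝕋) q := by
  refine le_antisymm ?_ (le_ciInf (dist_coe_le_abs p q))
  rw [dist_eq_norm, ← AddCircle.coe_sub, AddCircle.norm_eq]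
  refine (ciInf_le ⟨0, by rintro _ ⟨n, rfl⟩; positivity⟩ (-round ((2 * π)⁻¹ * (p - q)))).trans_eq ?_
  push_cast
  ring_nf

lemma arcDist_le_abs (p q : ℝ) (n : ℤ) : arcDist p q ≤ |p - q + 2 * π * n| :=
  (arcDist_eq_dist p q).trans_le (dist_coe_le_abs p q n)

lemma arcDist_eq_abs {p q : ℝ} (h : |p - q| ≤ π) : arcDist p q = |p - q| := by
  rw [arcDist_eq_dist, dist_eq_norm, ← AddCircle.coe_sub, AddCircle.norm_coe_eq_abs_iff _
    (by positivity), abs_of_pos (by positivity : 0 < 2 * π)]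
  linarith

lemma arcDist_nonneg (p q : ℝ) : 0 ≤ arcDist p q :=
  (arcDist_eq_dist p q).symm ▸ dist_nonneg

lemma arcDist_le_pi (p q : ℝ) : arcDist p q ≤ π := by
  rw [arcDist_eq_dist, dist_eq_norm]
  refine (AddCircle.norm_le_half_period _ (by positivity)).trans_eq ?_
  rw [abs_of_pos (by positivity : 0 < 2 * π)]
  ring

lemma arcDist_comm (p q : ℝ) : arcDist p q = arcDist q p := by
  simp only [arcDist_eq_dist, dist_comm]

lemma arcDist_add_pi (u : ℝ) : arcDist u (u + π) = π := by
  rw [arcDist_eq_abs] <;> simp [abs_of_pos pi_pos]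

lemma chordLen_nonneg (u v : ℝ) : 0 ≤ chordLen u v := by
  have := sin_nonneg_of_nonneg_of_le_pi (x := arcDist u v / 2) (by linarith [arcDist_nonneg u v])
    (by linarith [arcDist_le_pi u v, pi_pos])
  unfold chordLen
  linarith

lemma chordLen_eq_two {u v : ℝ} (h : arcDist u v = π) : chordLen u v = 2 := by
  rw [chordLen, h, sin_pi_div_two, mul_one]

end ArcDist

section ShortestPaths

variable {S : Finset (ℝ × ℝ)} {p q : ℝ}

lemma walkCost_nonneg (q : ℝ) : ∀ (p : ℝ) (L : List (ℝ × ℝ)), 0 ≤ walkCost q p L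
  | p, [] => arcDist_nonneg p q
  | p, e :: L => by
    have := walkCost_nonneg q e.2 L
    have := arcDist_nonneg p e.1
    have := chordLen_nonneg e.1 e.2
    simp only [walkCost]
    linarith

lemma dS_le_walkCost {L : List (ℝ × ℝ)} (hL : ∀ e ∈ L, e ∈ S ∨ (e.2, e.1) ∈ S) :
    dS S p q ≤ walkCost q p L :=
  csInf_le ⟨0, by rintro _ ⟨L, -, rfl⟩; exact walkCost_nonneg q p L⟩ ⟨L, hL, rfl⟩

lemma le_dS {c : ℝ} (h : ∀ L : List (ℝ × ℝ), (∀ e ∈ L, e ∈ S ∨ (e.2, e.1) ∈ S) →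
    c ≤ walkCost q p L) : c ≤ dS S p q :=
  le_csInf ⟨_, [], by simp, rfl⟩ (by rintro _ ⟨L, hL, rfl⟩; exact h L hL)

lemma dS_nonneg (S : Finset (ℝ × ℝ)) (p q : ℝ) : 0 ≤ dS S p q :=
  le_dS fun L _ => walkCost_nonneg q p L

lemma dS_le_arcDist : dS S p q ≤ arcDist p q :=
  dS_le_walkCost (L := []) (by simp)

lemma dS_le_of_mem {e : ℝ × ℝ} (he : e ∈ S ∨ (e.2, e.1) ∈ S) :
    dS S p q ≤ arcDist p e.1 + chordLen e.1 e.2 + arcDist e.2 q :=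
  dS_le_walkCost (L := [e]) (by simpa using he)

/-- The three terms bound walks using no, one, and at least two diameters. -/
lemma min_le_walkCost_of_diameters {L : List (ℝ × ℝ)} (hL : ∀ e ∈ L, arcDist e.1 e.2 = π) :
    min (arcDist p q) (min (π + 2 - arcDist p q) 4) ≤ walkCost q p L := by
  match L with
  | [] => exact min_le_left _ _
  | [e] =>
    have hsplit := dist_triangle4 (e.1 : 𝕋) p q e.2
    simp only [← arcDist_eq_dist, hL e (by simp), arcDist_comm e.1 p, arcDist_comm q e.2] at hsplit
    simp only [walkCost, chordLen_eq_two (hL e (by simp))]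
    exact (min_le_right _ _).trans ((min_le_left _ _).trans (by linarith))
  | e :: e' :: L =>
    have := arcDist_nonneg p e.1
    have := arcDist_nonneg e.2 e'.1
    have := walkCost_nonneg q e'.2 L
    simp only [walkCost, chordLen_eq_two (hL e (by simp)), chordLen_eq_two (hL e' (by simp))]
    exact (min_le_right _ _).trans ((min_le_right _ _).trans (by linarith))

lemma min_le_dS_of_diameters (hS : ∀ s ∈ S, arcDist s.1 s.2 = π) :
    min (arcDist p q) (min (π + 2 - arcDist p q) 4) ≤ dS S p q :=
  le_dS fun L hL => min_le_walkCost_of_diameters fun e he => by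
    rcases hL e he with h | h
    · exact hS e h
    · rw [arcDist_comm]; exact hS _ h

lemma diamK_le_diamS {k : ℕ} (hcard : S.card = k) (hS : ∀ s ∈ S, IsShortcut s) :
    diamK k ≤ diamS S := by
  refine csInf_le ⟨0, ?_⟩ ⟨S, hcard, hS, rfl⟩
  rintro _ ⟨T, -, -, rfl⟩
  exact Real.sSup_nonneg (by rintro _ ⟨p, q, rfl⟩; exact dS_nonneg T p q)

end ShortestPaths

lemma exists_int_abs_sub_add_abs_sub_le {h : ℝ} (hh : 0 < h) (p t : ℝ) :
    ∃ m : ℤ, |p - m * h| + |t - m * h| ≤ max h |p - t| := by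
  set m := ⌊p / h⌋
  have hlo : m * h ≤ p := (le_div_iff₀ hh).mp (Int.floor_le _)
  have hhi : p < (m + 1) * h := (div_lt_iff₀ hh).mp (Int.lt_floor_add_one _)
  rcases lt_or_ge t (m * h) with ht | ht
  · refine ⟨m, le_max_of_le_right ?_⟩
    rw [abs_of_nonneg (by linarith), abs_of_neg (by linarith), abs_of_pos (by linarith)]
    linarith
  rcases lt_or_ge ((m + 1) * h) t with ht' | ht'
  · refine ⟨m + 1, le_max_of_le_right ?_⟩
    push_cast
    rw [abs_of_neg (by linarith), abs_of_pos (by linarith), abs_of_neg (by linarith)]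
    linarith
  · by_contra! hfar
    have h₀ := (le_max_left _ _).trans_lt (hfar m)
    have h₁ := (le_max_left _ _).trans_lt (hfar (m + 1))
    push_cast at h₁
    rw [abs_of_nonneg (by linarith), abs_of_nonneg (by linarith)] at h₀
    rw [abs_of_neg (by linarith), abs_of_nonpos (by linarith)] at h₁
    linarith

noncomputable def sixDiameters : Finset (ℝ × ℝ) :=
  (Finset.range 6).image fun j : ℕ => ((j : ℝ) * π / 6, (j : ℝ) * π / 6 + π)

namespace sixDiameters

lemma arcDist_eq_pi {s : ℝ × ℝ} (hs : s ∈ sixDiameters) : arcDist s.1 s.2 = π := by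
  obtain ⟨j, -, rfl⟩ := Finset.mem_image.mp hs
  exact arcDist_add_pi _

lemma card_eq : sixDiameters.card = 6 := by
  refine (Finset.card_image_of_injective _ fun i j hij => ?_).trans (Finset.card_range 6)
  have := congrArg Prod.fst hij
  field_simp [pi_ne_zero] at this
  exact_mod_cast this

/-- Writing `m = j + 6k` with `0 ≤ j < 6`, the point `m π / 6` is `j π / 6` or its antipode
according to the parity of `k`. -/
lemma exists_coe_eq (m : ℤ) : ∃ e : ℝ × ℝ, (e ∈ sixDiameters ∨ (e.2, e.1) ∈ sixDiameters) ∧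
    (e.1 : 𝕋) = (m * π / 6 : ℝ) ∧ (e.2 : 𝕋) = (m * π / 6 + π : ℝ) := by
  have hj : ((m % 6).toNat : ℤ) = m % 6 := Int.toNat_of_nonneg (Int.emod_nonneg m (by norm_num))
  set j := (m % 6).toNat
  have hmem : ((j : ℝ) * π / 6, (j : ℝ) * π / 6 + π) ∈ sixDiameters :=
    Finset.mem_image.mpr ⟨j, Finset.mem_range.mpr (by omega), rfl⟩
  have hm : (m : ℝ) = j + 6 * (m / 6 : ℤ) := by
    rw [← Int.cast_natCast, hj]; exact_mod_cast (Int.emod_add_mul_ediv m 6).symm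
  rcases Int.even_or_odd (m / 6) with ⟨l, hl⟩ | ⟨l, hl⟩
  · refine ⟨_, Or.inl hmem, ?_, ?_⟩
    · rw [← coe_add_two_pi_mul_intCast _ l, hm, hl]; push_cast; ring_nf
    · rw [← coe_add_two_pi_mul_intCast _ l, hm, hl]; push_cast; ring_nf
  · refine ⟨((j : ℝ) * π / 6 + π, (j : ℝ) * π / 6), Or.inr hmem, ?_, ?_⟩
    · rw [← coe_add_two_pi_mul_intCast _ l, hm, hl]; push_cast; ring_nf
    · rw [← coe_add_two_pi_mul_intCast _ (l + 1), hm, hl]; push_cast; ring_nf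

lemma dS_le_via (p q : ℝ) (m : ℤ) :
    dS sixDiameters p q ≤ arcDist p (m * π / 6) + 2 + arcDist (m * π / 6 + π) q := by
  obtain ⟨e, he, h₁, h₂⟩ := exists_coe_eq m
  have hdiam : arcDist e.1 e.2 = π := by
    rcases he with h | h
    · exact arcDist_eq_pi h
    · rw [arcDist_comm]; exact arcDist_eq_pi h
  refine (dS_le_of_mem he).trans_eq ?_
  rw [chordLen_eq_two hdiam, arcDist_eq_dist p, arcDist_eq_dist e.2, arcDist_eq_dist p,
    arcDist_eq_dist (_ + π), h₁, h₂]

lemma dS_le (p q : ℝ) : dS sixDiameters p q ≤ π / 2 + 1 := by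
  have hπ := pi_gt_three
  obtain ⟨n, hn⟩ := exists_abs_add_two_pi_mul_le_pi (p - (q - π))
  -- `t` is the representative of the antipode of `q` closest to `p`
  set t := q - π - 2 * π * n
  have hpt : |p - t| ≤ π := by convert hn using 2; ring
  rcases le_or_gt (π / 2 - 1) |p - t| with hfar | hnear
  · refine dS_le_arcDist.trans ?_
    rcases le_total 0 (p - t) with hsign | hsign
    · refine (arcDist_le_abs p q n).trans ?_
      rw [show p - q + 2 * π * n = p - t - π by ring,
        abs_of_nonpos (by linarith [le_abs_self (p - t)])]
      linarith [abs_of_nonneg hsign]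
    · refine (arcDist_le_abs p q (n + 1)).trans ?_
      rw [show p - q + 2 * π * ((n + 1 : ℤ) : ℝ) = p - t + π by push_cast; ring,
        abs_of_nonneg (by linarith [neg_abs_le (p - t)])]
      linarith [abs_of_nonpos hsign]
  · obtain ⟨m, hm⟩ := exists_int_abs_sub_add_abs_sub_le (by positivity : 0 < π / 6) p t
    refine (dS_le_via p q m).trans ?_
    have h₁ := arcDist_le_abs p (m * π / 6) 0
    have h₂ := arcDist_le_abs (m * π / 6 + π) q n
    rw [show p - m * π / 6 + 2 * π * ((0 : ℤ) : ℝ) = p - m * (π / 6) by push_cast; ring] at h₁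
    rw [show m * π / 6 + π - q + 2 * π * n = -(t - m * (π / 6)) by ring, abs_neg] at h₂
    have := max_le (by linarith : π / 6 ≤ π / 2 - 1) hnear.le
    linarith

lemma dS_zero_eq : dS sixDiameters 0 (π / 2 + 1) = π / 2 + 1 := by
  have hπ := pi_gt_three
  have hπ' := pi_le_four
  have harc : arcDist 0 (π / 2 + 1) = π / 2 + 1 := by
    rw [arcDist_eq_abs] <;> rw [zero_sub, abs_neg, abs_of_pos (by linarith)]
    linarith
  refine le_antisymm (dS_le 0 _) ?_
  have := min_le_dS_of_diameters (p := 0) (q := π / 2 + 1) fun _ => arcDist_eq_pi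
  rw [harc] at this
  refine le_trans (le_min le_rfl (le_min ?_ ?_)) this <;> linarith

lemma diamS_eq : diamS sixDiameters = π / 2 + 1 :=
  IsGreatest.csSup_eq ⟨⟨0, _, dS_zero_eq.symm⟩, by rintro _ ⟨p, q, rfl⟩; exact dS_le p q⟩

end sixDiameters

lemma pi_sub_sdelta_two : π - sdelta 2 = π / 2 + 1 := by
  rw [sdelta, div_self two_ne_zero, arcsin_one]
  ring

/-- the six diameters of the circle with endpoints at angles `jπ/6`,
`j = 0,…,11`, achieve diameter `π - δ(2) = π/2 + 1`; in particular `diam(6) ≤ π/2 + 1`. -/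
theorem stmt3 :
    diamS ((Finset.range 6).image fun j : ℕ => ((j : ℝ) * π / 6, (j : ℝ) * π / 6 + π))
        = π - sdelta 2 ∧
    π - sdelta 2 = π / 2 + 1 ∧
    diamK 6 ≤ π / 2 + 1 := by
  refine ⟨?_, pi_sub_sdelta_two, ?_⟩
  · exact sixDiameters.diamS_eq.trans pi_sub_sdelta_two.symm
  · refine (diamK_le_diamS sixDiameters.card_eq fun s hs => ?_).trans_eq sixDiameters.diamS_eq
    exact (sixDiameters.arcDist_eq_pi hs).trans_ne pi_ne_zero
end

section
/- Existence of the thresholds σ_k and λ_k: for k ∈ {4,5,6}, the function g(x) := δ(x) + δ(π − δ*_k − x) is strictly convex on the interval [π − δ*_k − 2, 2] and symmetric about x₀ = (π − δ*_k)/2, and satisfies g(x₀) < δ*_k/2 < g(2). Consequently the equation g(x) = δ*_k/2 has exactly two solutions σ_k < λ_k in [π − δ*_k − 2, 2], and they satisfy σ_k + λ_k = π − δ*_k. -/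
open Real MeasureTheory

/-!
With `c = π - δ*`, the function `g x = δ x + δ (c - x)` is a sum of two strictly convex functions
on `[c - 2, 2] ⊆ [0, 2]` and is invariant under `x ↦ c - x`. From `π - 2√2 < δ* ≤ δ 2` one gets
`g (c / 2) = 2 δ (c / 2) < δ* / 2`, because `arcsin (c / 4) < arcsin (√2 / 2) = π / 4`, and
`g 2 ≥ δ 2 ≥ δ* > δ* / 2`. The intermediate value theorem gives a root `λ` in `(c / 2, 2]`, its
mirror image `c - λ` is a second one, and strict convexity rules out a third: a point strictly
between two others takes a value below the larger of theirs.
-/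

open Set

lemma continuous_sdelta : Continuous sdelta := by
  unfold sdelta; fun_prop

lemma sdelta_two : sdelta 2 = π / 2 - 1 := by
  norm_num [sdelta]

lemma deriv_sdelta {a : ℝ} (h₁ : -2 < a) (h₂ : a < 2) :
    deriv sdelta a = ((√(1 - (a / 2) ^ 2))⁻¹ - 1) / 2 := by
  have hinner : HasDerivAt (fun x : ℝ => x / 2) (1 / 2) a := by
    simpa using (hasDerivAt_id a).div_const 2
  have h : HasDerivAt sdelta (1 / √(1 - (a / 2) ^ 2) * (1 / 2) - 1 / 2) a :=
    ((hasDerivAt_arcsin (by linarith) (by linarith)).comp a hinner).sub hinner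
  rw [h.deriv]
  ring

lemma strictAntiOn_sqrt_one_sub_sq_half :
    StrictAntiOn (fun a : ℝ => √(1 - (a / 2) ^ 2)) (Icc 0 2) := by
  intro x hx y hy hxy
  exact Real.sqrt_lt_sqrt (by nlinarith [hy.1, hy.2]) (by nlinarith [hx.1])

lemma strictMonoOn_sdelta : StrictMonoOn sdelta (Icc 0 2) := by
  refine strictMonoOn_of_deriv_pos (convex_Icc 0 2) continuous_sdelta.continuousOn ?_
  rw [interior_Icc]
  intro x hx
  have hlt : √(1 - (x / 2) ^ 2) < 1 := by
    simpa using strictAntiOn_sqrt_one_sub_sq_half (left_mem_Icc.2 zero_le_two)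
      (Ioo_subset_Icc_self hx) hx.1
  have hpos : 0 < √(1 - (x / 2) ^ 2) := Real.sqrt_pos.2 (by nlinarith [hx.1, hx.2])
  rw [deriv_sdelta (by linarith [hx.1]) hx.2]
  linarith [one_lt_inv_iff₀.2 ⟨hpos, hlt⟩]

lemma strictConvexOn_sdelta : StrictConvexOn ℝ (Icc 0 2) sdelta := by
  refine StrictMonoOn.strictConvexOn_of_deriv (convex_Icc 0 2) continuous_sdelta.continuousOn ?_
  rw [interior_Icc]
  intro x hx y hy hxy
  have hlt :=
    strictAntiOn_sqrt_one_sub_sq_half (Ioo_subset_Icc_self hx) (Ioo_subset_Icc_self hy) hxy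
  have hpos : 0 < √(1 - (y / 2) ^ 2) := Real.sqrt_pos.2 (by nlinarith [hy.1, hy.2])
  rw [deriv_sdelta (by linarith [hx.1]) hx.2, deriv_sdelta (by linarith [hy.1]) hy.2]
  linarith [inv_strictAnti₀ hpos hlt]

lemma sdelta_nonneg {a : ℝ} (h₀ : 0 ≤ a) (h₂ : a ≤ 2) : 0 ≤ sdelta a := by
  simpa [sdelta] using
    strictMonoOn_sdelta.monotoneOn (left_mem_Icc.2 zero_le_two) ⟨h₀, h₂⟩ h₀

lemma sdelta_lt_pi_div_four_sub {a : ℝ} (h : a < √2) : sdelta a < π / 4 - a / 2 := by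
  have : arcsin (a / 2) < π / 4 := by
    rw [arcsin_lt_iff_lt_sin' ⟨by linarith [pi_pos], by linarith [pi_pos]⟩, sin_pi_div_four]
    linarith
  unfold sdelta
  linarith

theorem StrictConvexOn.comp_const_sub {𝕜 E β : Type*} [Field 𝕜] [LinearOrder 𝕜]
    [IsStrictOrderedRing 𝕜] [AddCommGroup E] [Module 𝕜 E] [AddCommMonoid β] [PartialOrder β]
    [SMul 𝕜 β] {s : Set E} {f : E → β} (hf : StrictConvexOn 𝕜 s f) (c : E) :
    StrictConvexOn 𝕜 ((c - ·) ⁻¹' s) (fun x => f (c - x)) := by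
  have combo : ∀ x y : E, ∀ {a b : 𝕜}, a + b = 1 →
      c - (a • x + b • y) = a • (c - x) + b • (c - y) := fun x y a b hab => by
    rw [smul_sub, smul_sub, sub_add_sub_comm, Convex.combo_self hab]
  refine ⟨fun x hx y hy a b ha hb hab => ?_, fun x hx y hy hxy a b ha hb hab => ?_⟩
  · simpa only [mem_preimage, combo x y hab] using hf.1 hx hy ha hb hab
  · simpa only [combo x y hab] using hf.2 hx hy (sub_right_injective.ne hxy) ha hb hab

lemma strictConvexOn_sdelta_add_sdelta_sub {c : ℝ} (hc : 2 ≤ c) :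
    StrictConvexOn ℝ (Icc (c - 2) 2) (fun x => sdelta x + sdelta (c - x)) := by
  refine (strictConvexOn_sdelta.subset (Icc_subset_Icc (by linarith) le_rfl)
    (convex_Icc _ _)).add ((strictConvexOn_sdelta.comp_const_sub c).subset
      (fun x hx => ⟨by linarith [hx.2], by linarith [hx.1]⟩) (convex_Icc _ _))

theorem StrictConvexOn.eq_or_eq_of_apply_eq {g : ℝ → ℝ} {s : Set ℝ}
    (hg : StrictConvexOn ℝ s g) {p q x v : ℝ} (hp : p ∈ s) (hq : q ∈ s) (hx : x ∈ s) (hpq : p < q)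
    (hgp : g p = v) (hgq : g q = v) (hgx : g x = v) : x = p ∨ x = q := by
  have key : ∀ {y z w}, y ∈ s → w ∈ s → y < z → z < w → g z < max (g y) (g w) :=
    fun hy hw hyz hzw => hg.lt_on_openSegment hy hw (hyz.trans hzw).ne
      (by rw [openSegment_eq_Ioo (hyz.trans hzw)]; exact ⟨hyz, hzw⟩)
  by_contra! h
  rcases lt_or_gt_of_ne h.1 with hxp | hpx
  · simpa [hgx, hgq, hgp] using key hx hq hxp hpq
  rcases lt_or_gt_of_ne h.2 with hxq | hqx
  · simpa [hgx, hgq, hgp] using key hp hq hpx hxq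
  · simpa [hgx, hgq, hgp] using key hp hx hpq hqx

theorem StrictConvexOn.exists_symm_level_pair {g : ℝ → ℝ} {a b v : ℝ}
    (hg : StrictConvexOn ℝ (Icc a b) g) (hcont : ContinuousOn g (Icc a b)) (hab : a ≤ b)
    (hsymm : ∀ x ∈ Icc a b, g (a + b - x) = g x) (hmid : g ((a + b) / 2) < v) (hb : v ≤ g b) :
    ∃ p q, p ∈ Icc a b ∧ q ∈ Icc a b ∧ p < q ∧ g p = v ∧ g q = v ∧ p + q = a + b ∧
      ∀ x ∈ Icc a b, g x = v → x = p ∨ x = q := by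
  obtain ⟨q, hq, hgq⟩ := intermediate_value_Icc (by linarith) (hcont.mono
    (Icc_subset_Icc (by linarith) le_rfl)) ⟨hmid.le, hb⟩
  have hq_mid : (a + b) / 2 < q := lt_of_le_of_ne hq.1 (by rintro rfl; exact hmid.ne hgq)
  have hqI : q ∈ Icc a b := ⟨by linarith, hq.2⟩
  have hpI : a + b - q ∈ Icc a b := ⟨by linarith [hq.2], by linarith⟩
  have hgp : g (a + b - q) = v := (hsymm q hqI).trans hgq
  exact ⟨a + b - q, q, hpI, hqI, by linarith, hgp, hgq, by ring,
    fun x hx hgx => hg.eq_or_eq_of_apply_eq hpI hqI hx (by linarith) hgp hgq hgx⟩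

namespace dstarSpec

variable {k : ℕ} {d : ℝ}

lemma le_sdelta_two (hd : dstarSpec k d) : d ≤ sdelta 2 := by
  rcases hd with ⟨-, rfl⟩ | ⟨a, ha, -, rfl⟩
  · exact le_rfl
  · exact strictMonoOn_sdelta.monotoneOn ha (right_mem_Icc.2 zero_le_two) ha.2

lemma pi_sub_two_mul_sqrt_two_lt (hk : k ∈ ({4, 5, 6} : Set ℕ)) (hd : dstarSpec k d) :
    π - 2 * √2 < d := by
  have hsqrt : (1.414 : ℝ) < √2 := by
    rw [Real.lt_sqrt (by norm_num)]; norm_num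
  have hπ := pi_lt_d2
  rcases hd with ⟨-, rfl⟩ | ⟨a, ha, heq, rfl⟩
  · rw [sdelta_two]; linarith
  · have hk4 : (4 : ℝ) ≤ k := by
      rcases hk with rfl | rfl | rfl <;> norm_num
    have : 3 * π / 4 ≤ ((k : ℝ) - 1) * π / k := by
      rw [div_le_div_iff₀ (by norm_num) (by linarith)]; nlinarith [pi_pos]
    linarith [ha.2]

end dstarSpec

/-- existence of the thresholds `σ_k` and `λ_k` for `k ∈ {4,5,6}`:
`g(x) = δ(x) + δ(π - δ*_k - x)` is strictly convex on `[π - δ*_k - 2, 2]`, symmetric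
about `x₀ = (π - δ*_k)/2`, satisfies `g(x₀) < δ*_k/2 < g(2)`, and hence the equation
`g(x) = δ*_k/2` has exactly two solutions `σ_k < λ_k` there, with
`σ_k + λ_k = π - δ*_k`. -/
theorem stmt17 (k : ℕ) (hk : k ∈ ({4, 5, 6} : Set ℕ)) (dstar : ℝ)
    (hd : dstarSpec k dstar) :
    StrictConvexOn ℝ (Set.Icc (π - dstar - 2) 2)
        (fun x => sdelta x + sdelta (π - dstar - x)) ∧
    (∀ t : ℝ,
      sdelta ((π - dstar) / 2 + t) + sdelta (π - dstar - ((π - dstar) / 2 + t))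
        = sdelta ((π - dstar) / 2 - t) + sdelta (π - dstar - ((π - dstar) / 2 - t))) ∧
    sdelta ((π - dstar) / 2) + sdelta (π - dstar - (π - dstar) / 2) < dstar / 2 ∧
    dstar / 2 < sdelta 2 + sdelta (π - dstar - 2) ∧
    ∃ sig lam : ℝ, sig ∈ Set.Icc (π - dstar - 2) 2 ∧ lam ∈ Set.Icc (π - dstar - 2) 2 ∧
      sig < lam ∧
      sdelta sig + sdelta (π - dstar - sig) = dstar / 2 ∧
      sdelta lam + sdelta (π - dstar - lam) = dstar / 2 ∧
      sig + lam = π - dstar ∧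
      ∀ x ∈ Set.Icc (π - dstar - 2) 2,
        sdelta x + sdelta (π - dstar - x) = dstar / 2 → x = sig ∨ x = lam := by
  have hd_le := hd.le_sdelta_two
  have hd_gt := hd.pi_sub_two_mul_sqrt_two_lt hk
  rw [sdelta_two] at hd_le
  have hsqrt : √2 < 3 / 2 := by rw [Real.sqrt_lt' (by norm_num)]; norm_num
  have hπ := pi_gt_three
  have hc : 2 ≤ π - dstar := by linarith
  have hconv := strictConvexOn_sdelta_add_sdelta_sub hc
  have hsymm : ∀ x, sdelta (π - dstar - x) + sdelta (π - dstar - (π - dstar - x)) =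
      sdelta x + sdelta (π - dstar - x) := fun x => by rw [sub_sub_cancel, add_comm]
  have hmid : sdelta ((π - dstar) / 2) + sdelta (π - dstar - (π - dstar) / 2) < dstar / 2 := by
    rw [sub_half]
    linarith [sdelta_lt_pi_div_four_sub (a := (π - dstar) / 2) (by linarith)]
  have hend : dstar / 2 < sdelta 2 + sdelta (π - dstar - 2) := by
    linarith [sdelta_two, sdelta_nonneg (a := π - dstar - 2) (by linarith) (by linarith)]
  obtain ⟨sig, lam, hsig, hlam, hlt, hgsig, hglam, hsum, huniq⟩ :=
    hconv.exists_symm_level_pair (continuous_sdelta.add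
      (continuous_sdelta.comp (continuous_sub_left _))).continuousOn (by linarith)
      (fun x _ => by simpa only [sub_add_cancel] using hsymm x) (by simpa only [sub_add_cancel])
      hend.le
  exact ⟨hconv, fun t => by rw [← hsymm, sub_add_eq_sub_sub, sub_half], hmid, hend,
    sig, lam, hsig, hlam, hlt, hgsig, hglam, by linarith, huniq⟩
end
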